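/- arXiv:1612.06517 — 6 statements merged into one kernel-verified Lean document; each statement's English description precedes it below -/
import Mathlib

section
/- For 0 ≤ r ≤ k and θ > 0, the r-th elementary symmetric polynomial in x_1^θ,...,x_k^θ equals the ratio of generalized Schur-type determinants: e_r(x_1^θ,...,x_k^θ) = det[x_j^{μ_i^{(r)}+k-i}] / det[x_j^{μ_i^{(0)}+k-i}], where μ_l^{(r)} = (θ-1)(k-l)+θ for l ≤ r and μ_l^{(r)} = (θ-1)(k-l) for l > r, valid for positive real x_1,...,x_k. -/
/-!
With `y j = x j ^ θ` every entry becomes a natural power `y j ^ (k - 1 - i + [i < r])`. Reversing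
the rows and transposing, the numerator is the Vandermonde matrix of `y` with the power `k - r`
left out, and the denominator is the Vandermonde matrix itself; the sign of the row reversal
cancels in the ratio. The minor is the coefficient of `X ^ (k - r)` in
`det V(-X, y₁, …, yₖ) = ∏ (X + yᵢ) · det V(y)`, which is `e_r(y) · det V(y)` by Vieta.
-/

open Matrix Polynomial Finset

namespace Matrix

variable {R : Type*} [CommRing R] {k : ℕ}

theorem det_vandermonde_cons (a : R) (y : Fin k → R) :
    det (vandermonde (Fin.cons a y)) = (∏ i, (y i - a)) * det (vandermonde y) := by
  simp only [det_vandermonde, Fin.prod_univ_succ, Fin.prod_Ioi_zero, Fin.prod_Ioi_succ,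
    Fin.cons_zero, Fin.cons_succ]

/-- Laplace expansion along the first row; the entry `-X` makes the cofactor signs `(-1) ^ j`
cancel. -/
theorem det_vandermonde_cons_neg_X (y : Fin k → R) :
    det (vandermonde (Fin.cons (-X) fun i ↦ C (y i))) =
      ∑ j : Fin (k + 1), C (det (of fun i l : Fin k ↦ y i ^ (j.succAbove l : ℕ))) * X ^ (j : ℕ) := by
  rw [det_succ_row_zero]
  refine sum_congr rfl fun j _ ↦ ?_
  have hminor : (vandermonde (Fin.cons (-X) fun i ↦ C (y i))).submatrix Fin.succ j.succAbove =
      (of fun i l : Fin k ↦ y i ^ (j.succAbove l : ℕ)).map C := by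
    ext i l : 1
    simp only [submatrix_apply, vandermonde_apply, Fin.cons_succ, map_apply, of_apply, map_pow]
  rw [hminor, ← RingHom.mapMatrix_apply, ← RingHom.map_det, vandermonde_apply, Fin.cons_zero,
    ← mul_pow, neg_one_mul, neg_neg, mul_comm]

theorem det_vandermonde_map {S : Type*} [CommRing S] (f : R →+* S) (y : Fin k → R) :
    det (vandermonde fun i ↦ f (y i)) = f (det (vandermonde y)) := by
  simp only [det_vandermonde, map_prod, map_sub]

theorem det_pow_succAbove (y : Fin k → R) (m : Fin (k + 1)) :
    det (of fun i j : Fin k ↦ y i ^ (m.succAbove j : ℕ)) =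
      (∑ T ∈ univ.powersetCard (k - m), ∏ i ∈ T, y i) * det (vandermonde y) := by
  have h := congrArg (coeff · m)
    ((det_vandermonde_cons_neg_X y).symm.trans (det_vandermonde_cons _ _))
  simp only [finsetSum_coeff, coeff_C_mul_X_pow, det_vandermonde_map, coeff_mul_C,
    sub_neg_eq_add, add_comm (C _)] at h
  rw [Finset.prod_X_add_C_coeff _ _ (by simpa using m.is_le)] at h
  simpa [Fin.val_inj] using h

theorem of_pow_rev_add_ite_eq (y : Fin k → R) {r : ℕ} (hr : r ≤ k) :
    (of fun i j : Fin k ↦ y j ^ (k - 1 - i + if (i : ℕ) < r then 1 else 0)) =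
      (of fun i j : Fin k ↦ y i ^ ((⟨k - r, by omega⟩ : Fin (k + 1)).succAbove j : ℕ))ᵀ.submatrix
        Fin.revPerm id := by
  ext i j
  simp only [of_apply, transpose_apply, submatrix_apply, id, Fin.revPerm_apply, Fin.succAbove,
    Fin.lt_def, Fin.val_castSucc, Fin.val_rev]
  have := i.is_lt
  split_ifs <;> simp only [Fin.val_castSucc, Fin.val_succ, Fin.val_rev] <;> congr 1 <;> omega

theorem det_pow_rev_add_ite (y : Fin k → R) {r : ℕ} (hr : r ≤ k) :
    det (of fun i j : Fin k ↦ y j ^ (k - 1 - i + if (i : ℕ) < r then 1 else 0)) =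
      Equiv.Perm.sign (Fin.revPerm : Equiv.Perm (Fin k)) *
        ((∑ T ∈ univ.powersetCard r, ∏ i ∈ T, y i) * det (vandermonde y)) := by
  rw [of_pow_rev_add_ite_eq y hr, det_permute, det_transpose, det_pow_succAbove]
  simp only [Nat.sub_sub_self hr]

theorem det_pow_rev (y : Fin k → R) :
    det (of fun i j : Fin k ↦ y j ^ (k - 1 - i)) =
      Equiv.Perm.sign (Fin.revPerm : Equiv.Perm (Fin k)) * det (vandermonde y) := by
  simpa using det_pow_rev_add_ite y k.zero_le

end Matrix

theorem Real.rpow_schur_exponent_eq_pow {θ x : ℝ} (hx : 0 < x) {k : ℕ} (i : Fin k) (p : Prop)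
    [Decidable p] :
    x ^ (((θ - 1) * (k - 1 - i) + if p then θ else 0) + (k - 1 - i)) =
      (x ^ θ) ^ (k - 1 - i + if p then 1 else 0) := by
  have hcast : ((k - 1 - i : ℕ) : ℝ) = k - 1 - i := by
    rw [Nat.sub_sub, Nat.cast_sub (by omega), Nat.cast_add, Nat.cast_one, sub_add_eq_sub_sub]
  rw [← Real.rpow_natCast, ← Real.rpow_mul hx.le]
  congr 1
  split_ifs <;> push_cast [hcast] <;> ring

/-- e_r(x_1^θ,...,x_k^θ) equals a ratio of generalized Schur-type determinants with real
exponents μ_l^{(r)} = (θ-1)(k-l) + θ·[l ≤ r]. -/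
theorem esymm_pow_eq_det_ratio (k r : ℕ) (hr : r ≤ k) (θ : ℝ) (hθ : 0 < θ)
    (x : Fin k → ℝ) (hx : ∀ i, 0 < x i) (hinj : Function.Injective x) :
    (∑ T ∈ Finset.univ.powersetCard r, ∏ i ∈ T, x i ^ θ) =
      Matrix.det (Matrix.of fun i j : Fin k =>
          x j ^ (((θ - 1) * (k - 1 - (i : ℕ)) + (if (i : ℕ) < r then θ else 0))
            + ((k : ℝ) - 1 - (i : ℕ)))) /
      Matrix.det (Matrix.of fun i j : Fin k =>
          x j ^ ((θ - 1) * (k - 1 - (i : ℕ)) + ((k : ℝ) - 1 - (i : ℕ)))) := by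
  set y : Fin k → ℝ := fun i ↦ x i ^ θ
  have hy : Function.Injective y := fun a b hab ↦
    hinj (Real.rpow_left_injOn hθ.ne' (hx a).le (hx b).le hab)
  have hden (i j : Fin k) : x j ^ ((θ - 1) * (k - 1 - (i : ℕ)) + ((k : ℝ) - 1 - (i : ℕ))) =
      y j ^ (k - 1 - i) := by
    simpa using Real.rpow_schur_exponent_eq_pow (θ := θ) (hx j) i False
  simp only [Real.rpow_schur_exponent_eq_pow, hx, hden]
  rw [det_pow_rev_add_ite y hr, det_pow_rev, mul_div_mul_left _ _ (by simp),
    mul_div_cancel_right₀ _ (det_vandermonde_ne_zero_iff.mpr hy)]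
end

section
/- The Selberg integral at τ = 1: ∫_{[0,1]^N} ∏_{i=1}^N x_i^{α_1-1}(1-x_i)^{α_2-1} ∏_{1≤j<k≤N}(x_j-x_k)^2 dx = ∏_{j=0}^{N-1} Γ(α_1+j)Γ(α_2+j)Γ(2+j)/Γ(α_1+α_2+N+j-1), for α_1, α_2 > 0. -/
/-!
Write the squared Vandermonde product as `det[(xᵢ - 1)^k] · det[xᵢ^l w(xᵢ)]`, where `w` is the
beta weight. Andréief's identity turns the `N`-fold integral into `N! · det[∫₀¹ (t - 1)^k t^l w]`,
and the moments are `(-1)^k B(α₁ + l, α₂ + k)`. Pulling `Γ(α₂ + k)` out of the rows and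
`Γ(α₁ + l)` out of the columns leaves `det[1 / Γ(c + k + l)]` with `c = α₁ + α₂`. Since
`Γ(c + N - 1 + l) / Γ(c + k + l)` is a monic polynomial of degree `N - 1 - k` in `l`, this is a
Vandermonde determinant at the points `0, …, N - 1` in reversed order; the reversal contributes
the sign `(-1)^k`, which cancels the sign of the moments.
-/

open MeasureTheory Finset Polynomial Equiv Nat

theorem ofReal_cpow_mul_one_sub_cpow {p q t : ℝ} (ht : t ∈ Set.Icc (0 : ℝ) 1) :
    (t : ℂ) ^ ((p : ℂ) - 1) * (1 - (t : ℂ)) ^ ((q : ℂ) - 1)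
      = ((t ^ (p - 1) * (1 - t) ^ (q - 1) : ℝ) : ℂ) := by
  rw [Complex.ofReal_mul, Complex.ofReal_cpow ht.1, Complex.ofReal_cpow (by linarith [ht.2])]
  push_cast
  rfl

theorem integrableOn_rpow_mul_one_sub_rpow {p q : ℝ} (hp : 0 < p) (hq : 0 < q) :
    IntegrableOn (fun t : ℝ => t ^ (p - 1) * (1 - t) ^ (q - 1)) (Set.Icc 0 1) := by
  have h := Complex.betaIntegral_convergent (u := p) (v := q) (by simpa) (by simpa)
  rw [intervalIntegrable_iff_integrableOn_Icc_of_le zero_le_one] at h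
  refine IntegrableOn.congr_fun h.re (fun t ht => ?_) measurableSet_Icc
  simp only [ofReal_cpow_mul_one_sub_cpow ht, RCLike.re_to_complex, Complex.ofReal_re]

theorem integral_rpow_mul_one_sub_rpow {p q : ℝ} (hp : 0 < p) (hq : 0 < q) :
    ∫ t in Set.Icc (0 : ℝ) 1, t ^ (p - 1) * (1 - t) ^ (q - 1) = ProbabilityTheory.beta p q := by
  rw [ProbabilityTheory.beta_eq_betaIntegralReal p q hp hq, Complex.betaIntegral,
    intervalIntegral.integral_of_le zero_le_one, ← integral_Icc_eq_integral_Ioc,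
    setIntegral_congr_fun measurableSet_Icc fun t ht => ofReal_cpow_mul_one_sub_cpow ht,
    integral_complex_ofReal, Complex.ofReal_re]

theorem Real.Gamma_add_nat_eq_mul_ascPochhammer {x : ℝ} (hx : ∀ k : ℕ, x ≠ -k) (n : ℕ) :
    Real.Gamma (x + n) = Real.Gamma x * (ascPochhammer ℝ n).eval x := by
  induction n with
  | zero => simp
  | succ n ih =>
    have hxn : x + n ≠ 0 := fun h => hx n (by linarith)
    rw [Nat.cast_succ, ← add_assoc, Real.Gamma_add_one hxn, ih, ascPochhammer_succ_eval]
    ring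

namespace Matrix

variable {R : Type*} [CommRing R]

theorem det_vandermonde_neg {n : ℕ} (v : Fin n → R) :
    (vandermonde (-v)).det = (∏ k : Fin n, (-1 : R) ^ (k : ℕ)) * (vandermonde v).det := by
  rw [← det_mul_row]
  congr 1
  ext i k
  rw [vandermonde_apply, of_apply, vandermonde_apply, Pi.neg_apply, neg_pow]

theorem det_vandermonde_natCast (n : ℕ) :
    (vandermonde fun i : Fin n => (i : R)).det = ∏ i : Fin n, ((i : ℕ)! : R) := by
  cases n with
  | zero => simp
  | succ n =>
    rw [det_vandermonde_id_eq_superFactorial, ← Nat.prod_range_succ_factorial,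
      Fin.prod_univ_eq_prod_range (fun i => ((i ! : ℕ) : R)), Nat.cast_prod]

theorem det_eval_eq_det_vandermonde_rev {n : ℕ} (v : Fin n → R) (p : Fin n → R[X])
    (h_deg : ∀ k, (p k).natDegree = n - 1 - k) (h_monic : ∀ k, (p k).Monic) :
    (of fun k l => (p k).eval (v l)).det = (vandermonde (v ∘ Fin.rev)).det := by
  rw [det_eval_matrixOfPolynomials_eq_det_vandermonde _ (p ∘ Fin.rev)
      (fun j => by simp only [Function.comp, h_deg, Fin.val_rev]; omega) (fun j => h_monic _),
    ← det_transpose, ← det_submatrix_equiv_self Fin.revPerm]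
  rfl

theorem det_eval_natCast_eq_prod_neg_one_pow_mul_factorial {n : ℕ} (p : Fin n → R[X])
    (h_deg : ∀ k, (p k).natDegree = n - 1 - k) (h_monic : ∀ k, (p k).Monic) :
    (of fun k l : Fin n => (p k).eval (l : R)).det
      = ∏ k : Fin n, (-1 : R) ^ (k : ℕ) * (k : ℕ)! := by
  have hrev : (fun l : Fin n => (l : R)) ∘ Fin.rev
      = fun i => (-fun i : Fin n => (i : R)) i + (n - 1 : ℕ) := by
    ext i
    have hi := i.2
    simp only [Function.comp, Fin.val_rev, Pi.neg_apply]
    rw [Nat.cast_sub (by omega), Nat.cast_sub (by omega)]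
    push_cast
    ring
  rw [det_eval_eq_det_vandermonde_rev _ p h_deg h_monic, hrev, det_vandermonde_add,
    det_vandermonde_neg, det_vandermonde_natCast, prod_mul_distrib]

theorem prod_mul_prod_sub_sq_eq_det_mul_det {n : ℕ} (w : R → R) (c : R) (x : Fin n → R) :
    (∏ i, w (x i)) * ∏ i, ∏ j ∈ Ioi i, (x i - x j) ^ 2
      = (of fun i k : Fin n => (x i - c) ^ (k : ℕ)).det
          * (of fun i l : Fin n => x i ^ (l : ℕ) * w (x i)).det := by
  have hshift : (of fun i k : Fin n => (x i - c) ^ (k : ℕ)).det = (vandermonde x).det :=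
    det_vandermonde_sub x c
  have hweight : (of fun i l : Fin n => x i ^ (l : ℕ) * w (x i)).det
      = (∏ i, w (x i)) * (vandermonde x).det := by
    rw [← det_mul_column]
    congr 1
    ext i l
    exact mul_comm _ _
  rw [hshift, hweight, det_vandermonde, mul_left_comm, ← sq, ← Finset.prod_pow]
  congr 2
  ext i
  rw [← Finset.prod_pow]
  exact prod_congr rfl fun j _ => by ring

theorem sum_perm_sum_perm_sign_mul_prod {ι : Type*} [Fintype ι] [DecidableEq ι]
    (M : Matrix ι ι R) :
    ∑ σ : Perm ι, ∑ τ : Perm ι,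
        ((Perm.sign σ : ℤ) : R) * (Perm.sign τ : ℤ) * ∏ i, M (σ i) (τ i)
      = (Fintype.card ι)! * M.det := by
  have hτ : ∀ τ : Perm ι, ∑ σ : Perm ι,
      ((Perm.sign σ : ℤ) : R) * (Perm.sign τ : ℤ) * ∏ i, M (σ i) (τ i) = M.det := by
    intro τ
    rw [M.det_apply', ← Equiv.sum_comp (Equiv.mulRight τ)]
    refine sum_congr rfl fun π _ => ?_
    have hsign : ((Perm.sign (π * τ) : ℤ) : R) * (Perm.sign τ : ℤ) = (Perm.sign π : ℤ) := by
      rw [Perm.sign_mul, Units.val_mul, Int.cast_mul, mul_assoc, ← Int.cast_mul,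
        ← Units.val_mul, Int.units_mul_self, Units.val_one, Int.cast_one, mul_one]
    rw [Equiv.coe_mulRight, hsign, ← Equiv.prod_comp τ (fun i => M (π i) i)]
    rfl
  rw [sum_comm, sum_congr rfl fun τ _ => hτ τ, sum_const, Finset.card_univ, Fintype.card_perm,
    nsmul_eq_mul]

end Matrix

/-- Andréief's identity. -/
theorem integral_det_mul_det {𝕜 α ι : Type*} [RCLike 𝕜] [MeasurableSpace α] (μ : Measure α)
    [SigmaFinite μ] [Fintype ι] [DecidableEq ι] (f g : ι → α → 𝕜)
    (hfg : ∀ k l, Integrable (fun t => f k t * g l t) μ) :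
    ∫ x : ι → α, (Matrix.of fun i k => f k (x i)).det * (Matrix.of fun i l => g l (x i)).det
        ∂(Measure.pi fun _ => μ)
      = (Fintype.card ι)! * (Matrix.of fun k l => ∫ t, f k t * g l t ∂μ).det := by
  have hdet : ∀ (h : ι → α → 𝕜) (x : ι → α), (Matrix.of fun i k => h k (x i)).det
      = ∑ σ : Perm ι, ((Perm.sign σ : ℤ) : 𝕜) * ∏ i, h (σ i) (x i) := fun h x => by
    rw [← Matrix.det_transpose, Matrix.det_apply']
    rfl
  have hexpand : ∀ x : ι → α,
      (Matrix.of fun i k => f k (x i)).det * (Matrix.of fun i l => g l (x i)).det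
        = ∑ σ : Perm ι, ∑ τ : Perm ι, ((Perm.sign σ : ℤ) : 𝕜) * (Perm.sign τ : ℤ) *
            ∏ i, f (σ i) (x i) * g (τ i) (x i) := by
    intro x
    rw [hdet f, hdet g, sum_mul_sum]
    refine sum_congr rfl fun σ _ => sum_congr rfl fun τ _ => ?_
    rw [prod_mul_distrib]
    ring
  have hint : ∀ σ τ : Perm ι, Integrable
      (fun x : ι → α => ∏ i, f (σ i) (x i) * g (τ i) (x i)) (Measure.pi fun _ => μ) :=
    fun σ τ => Integrable.fintype_prod fun i => hfg (σ i) (τ i)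
  simp_rw [hexpand]
  rw [integral_finsetSum _ fun σ _ => integrable_finsetSum _ fun τ _ => (hint σ τ).const_mul _,
    ← Matrix.sum_perm_sum_perm_sign_mul_prod]
  refine sum_congr rfl fun σ _ => ?_
  rw [integral_finsetSum _ fun τ _ => (hint σ τ).const_mul _]
  refine sum_congr rfl fun τ _ => ?_
  rw [integral_const_mul, integral_fintype_prod_eq_prod (fun i t => f (σ i) t * g (τ i) t)]
  rfl

open Matrix in
theorem det_inv_Gamma_add_add {c : ℝ} (hc : 0 < c) (N : ℕ) :
    (of fun k l : Fin N => (Real.Gamma (c + k + l))⁻¹).det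
      = ∏ k : Fin N, (-1) ^ (k : ℕ) * (k : ℕ)! / Real.Gamma (c + N - 1 + k) := by
  set p : Fin N → ℝ[X] := fun k => (ascPochhammer ℝ (N - 1 - k)).comp (X + C (c + k))
  have hentry : ∀ k l : Fin N, (Real.Gamma (c + k + l))⁻¹
      = (Real.Gamma (c + N - 1 + l))⁻¹ * (p k).eval (l : ℝ) := by
    intro k l
    have hk := k.2
    have hG := Real.Gamma_add_nat_eq_mul_ascPochhammer (x := c + k + l)
      (fun m h => by linarith [(Nat.cast_nonneg m : (0 : ℝ) ≤ m)]) (N - 1 - k)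
    rw [show c + k + l + ((N - 1 - k : ℕ) : ℝ) = c + N - 1 + l by
      rw [Nat.cast_sub (by omega), Nat.cast_sub (by omega)]; push_cast; ring] at hG
    rw [hG, eval_comp]
    simp only [eval_add, eval_X, eval_C]
    rw [show (l : ℝ) + (c + k) = c + k + l by ring]
    have hN : (1 : ℝ) ≤ N := by exact_mod_cast (by omega : 1 ≤ N)
    have hl : (0 : ℝ) ≤ l := Nat.cast_nonneg _
    have hA := right_ne_zero_of_mul (hG ▸ (Real.Gamma_pos_of_pos (by linarith)).ne')
    rw [mul_inv, mul_assoc, inv_mul_cancel₀ hA, mul_one]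
  have hdeg : ∀ k, (p k).natDegree = N - 1 - k := by
    intro k
    rw [natDegree_comp, natDegree_X_add_C, ascPochhammer_natDegree, mul_one]
  have hmonic : ∀ k, (p k).Monic := fun k => (monic_ascPochhammer _ _).comp_X_add_C _
  have hfactor := det_mul_row (fun l : Fin N => (Real.Gamma (c + N - 1 + l))⁻¹)
    (of fun k l : Fin N => (p k).eval (l : ℝ))
  simp only [of_apply, ← hentry] at hfactor
  rw [hfactor, det_eval_natCast_eq_prod_neg_one_pow_mul_factorial p hdeg hmonic,
    ← prod_mul_distrib]
  refine prod_congr rfl fun k _ => ?_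
  ring

theorem eqOn_sub_one_pow_mul_pow_mul_rpow {a b : ℝ} (k l : ℕ) :
    Set.EqOn (fun t : ℝ => (t - 1) ^ k * (t ^ l * (t ^ (a - 1) * (1 - t) ^ (b - 1))))
      (fun t => (-1) ^ k * (t ^ (a + l - 1) * (1 - t) ^ (b + k - 1))) (Set.Ioo 0 1) := by
  intro t ⟨ht0, ht1⟩
  have h1t : 0 < 1 - t := by linarith
  simp only
  rw [show a + l - 1 = l + (a - 1) by ring, show b + k - 1 = k + (b - 1) by ring,
    Real.rpow_add ht0, Real.rpow_add h1t, Real.rpow_natCast, Real.rpow_natCast,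
    show t - 1 = -1 * (1 - t) by ring, mul_pow]
  ring

theorem integrableOn_sub_one_pow_mul_pow_mul_rpow {a b : ℝ} (ha : 0 < a) (hb : 0 < b)
    (k l : ℕ) :
    IntegrableOn (fun t : ℝ => (t - 1) ^ k * (t ^ l * (t ^ (a - 1) * (1 - t) ^ (b - 1))))
      (Set.Icc 0 1) := by
  rw [integrableOn_Icc_iff_integrableOn_Ioo]
  have hbeta := integrableOn_rpow_mul_one_sub_rpow (p := a + l) (q := b + k)
    (by positivity) (by positivity)
  exact IntegrableOn.congr_fun ((hbeta.mono_set Set.Ioo_subset_Icc_self).const_mul _)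
    (eqOn_sub_one_pow_mul_pow_mul_rpow k l).symm measurableSet_Ioo

theorem integral_sub_one_pow_mul_pow_mul_rpow {a b : ℝ} (ha : 0 < a) (hb : 0 < b) (k l : ℕ) :
    ∫ t in Set.Icc (0 : ℝ) 1, (t - 1) ^ k * (t ^ l * (t ^ (a - 1) * (1 - t) ^ (b - 1)))
      = (-1) ^ k * ProbabilityTheory.beta (a + l) (b + k) := by
  rw [integral_Icc_eq_integral_Ioo,
    setIntegral_congr_fun measurableSet_Ioo (eqOn_sub_one_pow_mul_pow_mul_rpow k l),
    integral_const_mul, ← integral_Icc_eq_integral_Ioo,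
    integral_rpow_mul_one_sub_rpow (by positivity) (by positivity)]

open Matrix in
theorem det_neg_one_pow_mul_beta {a b : ℝ} (ha : 0 < a) (hb : 0 < b) (N : ℕ) :
    (of fun k l : Fin N => (-1) ^ (k : ℕ) * ProbabilityTheory.beta (a + l) (b + k)).det
      = ∏ k : Fin N, Real.Gamma (a + k) * Real.Gamma (b + k) * (k : ℕ)!
          / Real.Gamma (a + b + N - 1 + k) := by
  have hentry : ∀ k l : Fin N, (-1) ^ (k : ℕ) * ProbabilityTheory.beta (a + l) (b + k)
      = ((-1) ^ (k : ℕ) * Real.Gamma (b + k))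
          * (Real.Gamma (a + l) * (Real.Gamma (a + b + k + l))⁻¹) := by
    intro k l
    rw [ProbabilityTheory.beta, show a + l + (b + k) = a + b + k + l by ring]
    ring
  have hrows := det_mul_column (fun k : Fin N => (-1) ^ (k : ℕ) * Real.Gamma (b + k))
    (of fun k l : Fin N => Real.Gamma (a + l) * (Real.Gamma (a + b + k + l))⁻¹)
  have hcols := det_mul_row (fun l : Fin N => Real.Gamma (a + l))
    (of fun k l : Fin N => (Real.Gamma (a + b + k + l))⁻¹)
  simp only [of_apply, ← hentry] at hrows hcols
  rw [hrows, hcols, det_inv_Gamma_add_add (by positivity), ← prod_mul_distrib,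
    ← prod_mul_distrib]
  refine prod_congr rfl fun k _ => ?_
  have hsign : ((-1 : ℝ) ^ (k : ℕ)) * (-1) ^ (k : ℕ) = 1 := by
    rw [← mul_pow, neg_one_mul, neg_neg, one_pow]
  linear_combination (Real.Gamma (a + k) * Real.Gamma (b + k) * (k : ℕ)!
    / Real.Gamma (a + b + N - 1 + k)) * hsign

theorem selberg_integral_tau_one_general (N : ℕ) (α₁ α₂ : ℝ) (h1 : 0 < α₁) (h2 : 0 < α₂) :
    (∫ x in Set.univ.pi fun _ : Fin N => Set.Icc (0:ℝ) 1,
        (∏ i : Fin N, x i ^ (α₁ - 1) * (1 - x i) ^ (α₂ - 1)) *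
          ∏ i : Fin N, ∏ j ∈ Finset.Ioi i, (x i - x j) ^ 2) =
      ∏ j ∈ Finset.range N,
        Real.Gamma (α₁ + j) * Real.Gamma (α₂ + j) * Real.Gamma (2 + j) /
          Real.Gamma (α₁ + α₂ + N + j - 1) := by
  have hcube : volume.restrict (Set.univ.pi fun _ : Fin N => Set.Icc (0:ℝ) 1)
      = Measure.pi fun _ => volume.restrict (Set.Icc (0:ℝ) 1) := by
    rw [volume_pi, Measure.restrict_pi_pi]
  have hintegrand := Matrix.prod_mul_prod_sub_sq_eq_det_mul_det (n := N)
    (fun t : ℝ => t ^ (α₁ - 1) * (1 - t) ^ (α₂ - 1)) 1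
  simp_rw [hcube, hintegrand]
  rw [integral_det_mul_det _ (fun (k : Fin N) t => (t - 1) ^ (k : ℕ))
    (fun (l : Fin N) t => t ^ (l : ℕ) * (t ^ (α₁ - 1) * (1 - t) ^ (α₂ - 1)))
    fun k l => integrableOn_sub_one_pow_mul_pow_mul_rpow h1 h2 k l]
  simp_rw [integral_sub_one_pow_mul_pow_mul_rpow h1 h2]
  rw [det_neg_one_pow_mul_beta h1 h2, Fintype.card_fin,
    Fin.prod_univ_eq_prod_range (fun k => Real.Gamma (α₁ + k) * Real.Gamma (α₂ + k) * k !
      / Real.Gamma (α₁ + α₂ + N - 1 + k)), ← prod_range_add_one_eq_factorial, Nat.cast_prod,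
    ← prod_mul_distrib]
  refine prod_congr rfl fun j _ => ?_
  rw [show (2 : ℝ) + j = (j + 1 : ℕ) + 1 by push_cast; ring, Real.Gamma_nat_eq_factorial,
    factorial_succ, show α₁ + α₂ + N + j - 1 = α₁ + α₂ + N - 1 + j by ring]
  push_cast
  ring

/-- The Selberg integral at τ = 1. -/
theorem selberg_integral_tau_one (N : ℕ) (hN : 1 ≤ N) (α₁ α₂ : ℝ) (h1 : 0 < α₁) (h2 : 0 < α₂) :
    (∫ x in Set.univ.pi fun _ : Fin N => Set.Icc (0:ℝ) 1,
        (∏ i : Fin N, x i ^ (α₁ - 1) * (1 - x i) ^ (α₂ - 1)) *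
          ∏ i : Fin N, ∏ j ∈ Finset.Ioi i, (x i - x j) ^ 2) =
      ∏ j ∈ Finset.range N,
        Real.Gamma (α₁ + j) * Real.Gamma (α₂ + j) * Real.Gamma (2 + j) /
          Real.Gamma (α₁ + α₂ + N + j - 1) :=
  selberg_integral_tau_one_general N α₁ α₂ h1 h2
end

section
/- The e_N-recurrence coefficients: the unique coefficients c_s^{(ν)} such that F_ν(γ_1,...,γ_N) := Σ_{1≤l_1<...<l_{N-ν}≤N} ∏_{l∉{l_1,...,l_{N-ν}}} ∏_{m∈{l_1,...,l_{N-ν}}} [(γ_m+1-γ_l)/(γ_m-γ_l)] · ∏_{m∈{l_1,...,l_{N-ν}}}(γ_m+1) equals Σ_{s=0}^{ν} c_s^{(ν)} ∏_{l=1}^N (γ_l + s + 1) are c_s^{(ν)} = (-1)^{ν-s}/((ν-s)! s!). -/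
/-!
Write `S_k(t) = ∑_{#L = k} ∏_{m ∈ L} (γ_m + t) · W(L)` with `W(L)` the double product of the
statement, so that `F_ν = S_{N-ν}(1)`. Moving one element `j` out of each subset shows
`S_{k+1}(t+1) - S_{k+1}(t) = (N - k) · S_k(t)`; this rests on two identities for distinct nodes
`x_a`, both instances of Lagrange interpolation:
`∑_a ∏_{b ≠ a} (x_b + t)(x_b + 1 - x_a)/(x_b - x_a) = ∏_b (x_b + t + 1) - ∏_b (x_b + t)` and
`∑_a ∏_{b ≠ a} (x_a + 1 - x_b)/(x_a - x_b) = #s`.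
Hence `ν! · S_{N-ν}` is the `ν`-th forward difference of `t ↦ ∏_l (γ_l + t)`, and Newton's
formula for iterated forward differences gives the coefficients `(-1)^(ν-s) / ((ν-s)! s!)`.
-/

open Finset Polynomial Lagrange
open scoped Nat

section Lagrange

variable {K : Type*} [Field K] {ι : Type*}

lemma degree_nodal_sub_one_sub_nodal_lt (s : Finset ι) (v : ι → K) :
    (nodal s (v - 1) - nodal s v).degree < ((#s : ℕ) : WithBot ℕ) := by
  rw [← degree_nodal (s := s) (v := v - 1)]
  exact degree_sub_lt_left (by rw [degree_nodal, degree_nodal]) nodal_ne_zero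
    (by rw [nodal_monic.leadingCoeff, nodal_monic.leadingCoeff])

variable [DecidableEq ι] {s : Finset ι} {v : ι → K}

lemma eval_nodal_sub_one_sub_nodal_at_node {a : ι} (ha : a ∈ s) :
    (nodal s (v - 1) - nodal s v).eval (v a) = ∏ b ∈ s.erase a, (v a + 1 - v b) := by
  rw [eval_sub, eval_nodal_at_node ha, sub_zero, eval_nodal, ← mul_prod_erase s _ ha]
  simp only [Pi.sub_apply, Pi.one_apply, sub_sub_cancel, one_mul]
  exact prod_congr rfl fun b _ => by ring

lemma sum_prod_erase_add_one_sub_div_sub (hv : Set.InjOn v s) :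
    ∑ a ∈ s, ∏ b ∈ s.erase a, (v a + 1 - v b) / (v a - v b) = #s := by
  rcases s.eq_empty_or_nonempty with rfl | hs
  · simp
  have hcoeff : (nodal s (v - 1) - nodal s v).coeff (#s - 1) = (#s : K) := by
    rw [coeff_sub, nodal_eq, nodal_eq, prod_X_sub_C_coeff_card_pred _ _ hs.card_pos,
      prod_X_sub_C_coeff_card_pred _ _ hs.card_pos]
    simp [sum_sub_distrib]
  rw [← hcoeff, coeff_eq_sum hv (degree_nodal_sub_one_sub_nodal_lt s v)]
  refine sum_congr rfl fun a ha => ?_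
  rw [eval_nodal_sub_one_sub_nodal_at_node ha, prod_div_distrib]

lemma sum_prod_erase_mul_add_one_sub_div_sub (hv : Set.InjOn v s) (t : K) :
    ∑ a ∈ s, ∏ b ∈ s.erase a, (v b + t) * ((v b + 1 - v a) / (v b - v a)) =
      ∏ b ∈ s, (v b + (t + 1)) - ∏ b ∈ s, (v b + t) := by
  -- both sides are polynomials of degree `< #s` in `t`, so interpolate them at the nodes `t = -v a`
  have hneg : Set.InjOn (-v) s := fun a ha b hb h => hv ha hb (neg_injective h)
  set P := nodal s (-v - 1) - nodal s (-v)
  calc ∑ a ∈ s, ∏ b ∈ s.erase a, (v b + t) * ((v b + 1 - v a) / (v b - v a))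
      = ∑ a ∈ s, eval t (C (P.eval ((-v) a)) * Lagrange.basis s (-v) a) := by
        refine sum_congr rfl fun a ha => ?_
        rw [eval_mul, eval_C, eval_nodal_sub_one_sub_nodal_at_node ha, Lagrange.basis, eval_prod,
          ← prod_mul_distrib]
        refine prod_congr rfl fun b _ => ?_
        simp only [basisDivisor, eval_mul, eval_C, eval_sub, eval_X, Pi.neg_apply]
        ring
    _ = eval t P := by
        rw [← eval_finsetSum, ← interpolate_apply,
          ← eq_interpolate hneg (degree_nodal_sub_one_sub_nodal_lt s (-v))]
    _ = ∏ b ∈ s, (v b + (t + 1)) - ∏ b ∈ s, (v b + t) := by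
        simp only [P, eval_sub, eval_nodal, Pi.sub_apply, Pi.neg_apply, Pi.one_apply]
        congr 1 <;> exact prod_congr rfl fun b _ => by ring

end Lagrange

lemma sum_powersetCard_succ_sum_eq_sum_insert {ι M : Type*} [Fintype ι] [DecidableEq ι]
    [AddCommMonoid M] (k : ℕ) (F : Finset ι → ι → M) :
    ∑ L ∈ univ.powersetCard (k + 1), ∑ j ∈ L, F L j =
      ∑ S ∈ univ.powersetCard k, ∑ j ∈ Sᶜ, F (insert j S) j := by
  simp_rw [sum_sigma']
  refine sum_bij' (fun p _ => ⟨p.1.erase p.2, p.2⟩) (fun p _ => ⟨insert p.2 p.1, p.2⟩)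
    ?_ ?_ ?_ ?_ ?_ <;> rintro ⟨L, j⟩ h <;>
    simp only [mem_sigma, mem_powersetCard_univ, mem_compl] at h ⊢
  · exact ⟨by rw [card_erase_of_mem h.2, h.1]; rfl, notMem_erase _ _⟩
  · exact ⟨by rw [card_insert_of_notMem h.2, h.1], mem_insert_self _ _⟩
  · simp [insert_erase h.2]
  · simp [erase_insert h.2]
  · simp [insert_erase h.2]

section Laguerre

open fwdDiff

variable {K ι : Type*} [Field K] [Fintype ι] [DecidableEq ι] (γ : ι → K)

def laguerreWeight (L : Finset ι) : K :=
  ∏ l ∈ Lᶜ, ∏ m ∈ L, (γ m + 1 - γ l) / (γ m - γ l)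

/-- `laguerreSum γ (N - ν) 1` is the sum `F_ν(γ)` of the statement. -/
def laguerreSum (k : ℕ) (t : K) : K :=
  ∑ L ∈ univ.powersetCard k, (∏ m ∈ L, (γ m + t)) * laguerreWeight γ L

lemma laguerreWeight_insert {S : Finset ι} {j : ι} (hj : j ∉ S) :
    (∏ m ∈ S, (γ m + 1 - γ j) / (γ m - γ j)) * laguerreWeight γ (insert j S) =
      laguerreWeight γ S * ∏ l ∈ Sᶜ.erase j, (γ j + 1 - γ l) / (γ j - γ l) := by
  have hj' : j ∈ Sᶜ := mem_compl.mpr hj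
  rw [laguerreWeight, laguerreWeight, compl_insert, ← mul_prod_erase _ _ hj']
  simp_rw [prod_insert hj, prod_mul_distrib]
  ring

lemma laguerreSum_card : laguerreSum γ (Fintype.card ι) = fun t => ∏ l, (γ l + t) := by
  funext t
  rw [laguerreSum, ← Finset.card_univ, powersetCard_self, sum_singleton, laguerreWeight,
    compl_univ, prod_empty, mul_one]

variable {γ}

theorem fwdDiff_laguerreSum (hγ : Function.Injective γ) (k : ℕ) :
    Δ_[1] (laguerreSum γ (k + 1)) = (Fintype.card ι - k) • laguerreSum γ k := by
  funext t
  simp only [fwdDiff, laguerreSum, Pi.smul_apply, smul_sum, ← sum_sub_distrib, ← sub_mul]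
  calc ∑ L ∈ univ.powersetCard (k + 1),
        (∏ m ∈ L, (γ m + (t + 1)) - ∏ m ∈ L, (γ m + t)) * laguerreWeight γ L
      = ∑ L ∈ univ.powersetCard (k + 1), ∑ j ∈ L, (∏ m ∈ L.erase j, (γ m + t)) *
          ((∏ m ∈ L.erase j, (γ m + 1 - γ j) / (γ m - γ j)) * laguerreWeight γ L) := by
        refine sum_congr rfl fun L _ => ?_
        rw [← sum_prod_erase_mul_add_one_sub_div_sub hγ.injOn t, sum_mul]
        simp_rw [prod_mul_distrib, mul_assoc]
    _ = ∑ S ∈ univ.powersetCard k, ∑ j ∈ Sᶜ, (∏ m ∈ S, (γ m + t)) * laguerreWeight γ S *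
          ∏ l ∈ Sᶜ.erase j, (γ j + 1 - γ l) / (γ j - γ l) := by
        rw [sum_powersetCard_succ_sum_eq_sum_insert]
        refine sum_congr rfl fun S _ => sum_congr rfl fun j hj => ?_
        have hj : j ∉ S := mem_compl.mp hj
        rw [erase_insert hj, laguerreWeight_insert γ hj, mul_assoc]
    _ = ∑ S ∈ univ.powersetCard k, (Fintype.card ι - k) • ((∏ m ∈ S, (γ m + t)) *
          laguerreWeight γ S) := by
        refine sum_congr rfl fun S hS => ?_
        rw [← mul_sum, sum_prod_erase_add_one_sub_div_sub hγ.injOn, card_compl,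
          mem_powersetCard_univ.mp hS, nsmul_eq_mul, mul_comm]

theorem fwdDiff_iter_prod_add_eq_factorial_smul_laguerreSum (hγ : Function.Injective γ) {ν : ℕ}
    (hν : ν ≤ Fintype.card ι) :
    (Δ_[1])^[ν] (fun t => ∏ l, (γ l + t)) = ν ! • laguerreSum γ (Fintype.card ι - ν) := by
  induction ν with
  | zero => simp [laguerreSum_card]
  | succ ν ih =>
    have hk : Fintype.card ι - ν = Fintype.card ι - (ν + 1) + 1 := by omega
    rw [Function.iterate_succ_apply', ih (by omega), fwdDiff_const_smul, hk,
      fwdDiff_laguerreSum hγ, smul_smul, Nat.sub_sub_self (by omega), mul_comm,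
      Nat.factorial_succ]

end Laguerre

/-- The e_ν-recurrence coefficients for the Laguerre-type polynomial ensemble:
F_ν(γ) = Σ_{s=0}^ν (-1)^{ν-s}/((ν-s)! s!) ∏_l (γ_l+s+1). -/
theorem laguerre_esymm_coefficients (N ν : ℕ) (hν : ν ≤ N)
    (γ : Fin N → ℝ) (hγ : Function.Injective γ) :
    (∑ L ∈ Finset.univ.powersetCard (N - ν),
        (∏ m ∈ L, (γ m + 1)) *
          ∏ l ∈ Lᶜ, ∏ m ∈ L, ((γ m + 1 - γ l) / (γ m - γ l))) =
      ∑ s ∈ Finset.range (ν + 1),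
        ((-1 : ℝ) ^ (ν - s) / ((Nat.factorial (ν - s)) * (Nat.factorial s))) *
          ∏ l : Fin N, (γ l + s + 1) := by
  have hnewton := congrFun (fwdDiff_iter_prod_add_eq_factorial_smul_laguerreSum hγ
    (hν.trans_eq (Fintype.card_fin N).symm)) 1
  rw [fwdDiff_iter_eq_sum_shift, Fintype.card_fin, Pi.smul_apply, nsmul_eq_mul] at hnewton
  change laguerreSum γ (N - ν) 1 = _
  rw [← inv_mul_cancel_left₀ (by positivity : (ν ! : ℝ) ≠ 0) (laguerreSum γ (N - ν) 1), ← hnewton,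
    mul_sum]
  refine sum_congr rfl fun s hs => ?_
  have hs : s ≤ ν := Nat.lt_succ_iff.mp (mem_range.mp hs)
  simp only [zsmul_eq_mul, Int.cast_mul, Int.cast_pow, Int.cast_neg, Int.cast_one,
    Int.cast_natCast, Nat.cast_choose ℝ hs, nsmul_eq_mul, mul_one, add_comm (1 : ℝ), ← add_assoc]
  field_simp
end

section
/- Laguerre biorthogonal polynomials of q-type: the polynomial q_k(x) = Σ_{j=0}^k (-1)^{k-j} C(k,j) [Γ(1+a+θk)/Γ(1+a+θj)] x^j satisfies ∫_0^∞ x^a e^{-x} p(x) q_k(x^θ) dx = 0 for every polynomial p of degree less than k, where a > -1 and θ > 0. -/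
/-!
Expanding `p` into monomials reduces the claim to `p = X ^ m` with `m < k`. Integrating termwise,
`∫ x ^ (a + m + θ j) e^{-x} = Γ(1 + a + θ j + m) = Γ(1 + a + θ j) · (1 + a + θ j)⁽ᵐ⁾` (rising factorial),
so the Gamma ratio in `q_k` cancels and the integral is `Γ(1 + a + θ k)` times the `k`-th forward
difference at `0` of the polynomial `j ↦ (1 + a + θ j)⁽ᵐ⁾` of degree `m < k`, which vanishes.
-/

open MeasureTheory Polynomial Finset Set Real

theorem Polynomial.sum_range_neg_one_pow_mul_choose_mul_eval_eq_zero {R : Type*} [CommRing R]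
    {P : R[X]} {k : ℕ} (hP : P.natDegree < k) :
    ∑ j ∈ range (k + 1), (-1 : R) ^ (k - j) * k.choose j * P.eval (j : R) = 0 := by
  have h := congr_fun (fwdDiff_iter_eq_zero_of_degree_lt hP) 0
  rw [fwdDiff_iter_eq_sum_shift] at h
  simpa [zsmul_eq_mul] using h

theorem Real.Gamma_add_nat_eq_mul_ascPochhammer_s13 {s : ℝ} (hs : ∀ m : ℕ, s ≠ -m) (n : ℕ) :
    Gamma (s + n) = Gamma s * (ascPochhammer ℝ n).eval s := by
  induction n with
  | zero => simp
  | succ n ih =>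
    have hsn : s + n ≠ 0 := fun h => hs n (by linarith)
    rw [Nat.cast_succ, ← add_assoc, Gamma_add_one hsn, ih, ascPochhammer_succ_right]
    simp only [eval_mul, eval_add, eval_X, eval_natCast]
    ring

theorem integrableOn_rpow_mul_exp_neg {b : ℝ} (hb : -1 < b) :
    IntegrableOn (fun x => x ^ b * exp (-x)) (Ioi 0) := by
  simpa [mul_comm] using GammaIntegral_convergent (s := b + 1) (by linarith)

theorem integral_rpow_mul_exp_neg {b : ℝ} (hb : -1 < b) :
    ∫ x in Ioi (0 : ℝ), x ^ b * exp (-x) = Gamma (b + 1) := by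
  simp [Gamma_eq_integral (s := b + 1) (by linarith), mul_comm]

noncomputable def laguerreQ (k : ℕ) (a θ y : ℝ) : ℝ :=
  ∑ j ∈ range (k + 1),
    (-1 : ℝ) ^ (k - j) * k.choose j * (Gamma (1 + a + θ * k) / Gamma (1 + a + θ * j)) * y ^ j

section

variable {k m : ℕ} {a θ : ℝ}

theorem rpow_mul_exp_neg_mul_pow_mul_laguerreQ_rpow {x : ℝ} (hx : 0 < x) :
    x ^ a * exp (-x) * x ^ m * laguerreQ k a θ (x ^ θ) =
      ∑ j ∈ range (k + 1), (-1 : ℝ) ^ (k - j) * k.choose j *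
        (Gamma (1 + a + θ * k) / Gamma (1 + a + θ * j)) * (x ^ (a + m + θ * j) * exp (-x)) := by
  rw [laguerreQ, mul_sum]
  refine sum_congr rfl fun j _ => ?_
  rw [rpow_add hx, rpow_add hx, rpow_natCast, rpow_mul_natCast hx.le]
  ring

theorem integrableOn_rpow_mul_exp_neg_mul_pow_mul_laguerreQ_rpow (ha : -1 < a) (hθ : 0 ≤ θ) :
    IntegrableOn (fun x => x ^ a * exp (-x) * x ^ m * laguerreQ k a θ (x ^ θ)) (Ioi 0) := by
  have hsum : IntegrableOn (fun x => ∑ j ∈ range (k + 1), (-1 : ℝ) ^ (k - j) * k.choose j *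
      (Gamma (1 + a + θ * k) / Gamma (1 + a + θ * j)) * (x ^ (a + m + θ * j) * exp (-x)))
      (Ioi 0) :=
    integrable_finsetSum _ fun j _ => (integrableOn_rpow_mul_exp_neg
      (by linarith [mul_nonneg hθ j.cast_nonneg, m.cast_nonneg (α := ℝ)])).const_mul _
  exact hsum.congr_fun (fun x hx => (rpow_mul_exp_neg_mul_pow_mul_laguerreQ_rpow hx).symm)
    measurableSet_Ioi

theorem integral_rpow_mul_exp_neg_mul_pow_mul_laguerreQ_rpow (ha : -1 < a) (hθ : 0 ≤ θ)
    (hmk : m < k) :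
    ∫ x in Ioi (0 : ℝ), x ^ a * exp (-x) * x ^ m * laguerreQ k a θ (x ^ θ) = 0 := by
  set P : ℝ[X] := (ascPochhammer ℝ m).comp (C θ * X + C (1 + a))
  have hP : P.natDegree < k := by
    calc P.natDegree ≤ m * 1 := by
          refine natDegree_comp_le.trans (Nat.mul_le_mul ?_ natDegree_linear_le)
          exact (ascPochhammer_natDegree ℝ m).le
      _ < k := by rwa [mul_one]
  have hpos : ∀ j : ℕ, 0 < 1 + a + θ * j := fun j => by
    linarith [mul_nonneg hθ j.cast_nonneg]
  have hmoment : ∀ j : ℕ, ∫ x in Ioi (0 : ℝ), x ^ (a + m + θ * j) * exp (-x) =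
      Gamma (1 + a + θ * j) * P.eval (j : ℝ) := by
    intro j
    rw [integral_rpow_mul_exp_neg (by linarith [hpos j, m.cast_nonneg (α := ℝ)]),
      show a + m + θ * j + 1 = 1 + a + θ * j + m by ring,
      Gamma_add_nat_eq_mul_ascPochhammer_s13 (fun i h => by linarith [hpos j]), eval_comp]
    simp only [eval_add, eval_mul, eval_C, eval_X]
    ring_nf
  rw [setIntegral_congr_fun measurableSet_Ioi
      (fun x hx => rpow_mul_exp_neg_mul_pow_mul_laguerreQ_rpow hx),
    integral_finsetSum _ fun j _ => (integrableOn_rpow_mul_exp_neg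
      (by linarith [hpos j, m.cast_nonneg (α := ℝ)])).const_mul _]
  calc ∑ j ∈ range (k + 1), ∫ x in Ioi (0 : ℝ), (-1 : ℝ) ^ (k - j) * k.choose j *
          (Gamma (1 + a + θ * k) / Gamma (1 + a + θ * j)) * (x ^ (a + m + θ * j) * exp (-x))
      = Gamma (1 + a + θ * k) *
          ∑ j ∈ range (k + 1), (-1 : ℝ) ^ (k - j) * k.choose j * P.eval (j : ℝ) := by
        rw [mul_sum]
        refine sum_congr rfl fun j _ => ?_
        rw [integral_const_mul, hmoment]
        field_simp [(Gamma_pos_of_pos (hpos j)).ne']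
    _ = 0 := by rw [sum_range_neg_one_pow_mul_choose_mul_eval_eq_zero hP, mul_zero]

end

/-- The Laguerre biorthogonal polynomial of q-type is orthogonal (against x^a e^{-x})
to all polynomials of degree less than k. -/
theorem laguerre_q_orthogonality (k : ℕ) (a θ : ℝ) (ha : -1 < a) (hθ : 0 < θ)
    (p : Polynomial ℝ) (hp : p.degree < k) :
    ∫ x in Set.Ioi (0:ℝ),
        x ^ a * Real.exp (-x) * p.eval x *
          ∑ j ∈ Finset.range (k + 1),
            (-1 : ℝ) ^ (k - j) * (Nat.choose k j) *
              (Real.Gamma (1 + a + θ * k) / Real.Gamma (1 + a + θ * j)) * (x ^ θ) ^ j = 0 := by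
  change ∫ x in Ioi (0 : ℝ), x ^ a * exp (-x) * p.eval x * laguerreQ k a θ (x ^ θ) = 0
  have hexpand : ∀ x : ℝ, x ^ a * exp (-x) * p.eval x * laguerreQ k a θ (x ^ θ) =
      ∑ m ∈ p.support, p.coeff m * (x ^ a * exp (-x) * x ^ m * laguerreQ k a θ (x ^ θ)) := by
    intro x
    rw [eval_eq_sum, Polynomial.sum_def, mul_sum, sum_mul]
    exact sum_congr rfl fun m _ => by ring
  have hmk : ∀ m ∈ p.support, m < k := fun m hm => by
    exact_mod_cast (le_degree_of_ne_zero (mem_support_iff.mp hm)).trans_lt hp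
  simp only [hexpand]
  rw [integral_finsetSum _ fun m _ =>
    (integrableOn_rpow_mul_exp_neg_mul_pow_mul_laguerreQ_rpow ha hθ.le).const_mul _]
  refine sum_eq_zero fun m hm => ?_
  rw [integral_const_mul,
    integral_rpow_mul_exp_neg_mul_pow_mul_laguerreQ_rpow ha hθ.le (hmk m hm), mul_zero]
end

section
/- Laguerre biorthogonal normalization: with p_k(x) = θ^k Σ_{ν=0}^k x^ν Σ_{s=0}^ν [(-1)^{k-s}/((ν-s)! s!)] Γ(k+(a+s+1)/θ)/Γ((a+s+1)/θ) and q_k(x) = Σ_{j=0}^k (-1)^{k-j} C(k,j) [Γ(1+a+θk)/Γ(1+a+θj)] x^j, one has ∫_0^∞ x^a e^{-x} p_k(x) q_k(x^θ) dx = θ^k Γ(θk+a+1) Γ(k+1), for a > -1, θ > 0. -/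
/-!
Expanding `p_k(x) q_k(x^θ)` into the monomials `x^(ν + θ j)`, the integral becomes
`∑ P_ν Q_j Γ(a + ν + θ j + 1)`. For fixed `ν`, `Γ(1 + a + θ j + ν) / Γ(1 + a + θ j)` is a
polynomial of degree `ν` in `j` with leading coefficient `θ^ν`, and the alternating binomial sum
over `j` defining `q_k` is the `k`-th forward difference at `0`: it kills degrees `< k` and
extracts `k!` times the `k`-th coefficient. Hence only `ν = k` survives. The same forward
difference, applied to the Pochhammer product `Γ(k + u) / Γ(u)` in `u = (a + s + 1) / θ`, shows
that the leading coefficient of `p_k` is `1`.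
-/

open MeasureTheory Finset Polynomial

theorem Polynomial.sum_range_alternating_choose_mul_eval {R : Type*} [CommRing R] {P : R[X]}
    {k : ℕ} (hP : P.natDegree ≤ k) :
    ∑ j ∈ range (k + 1), (-1 : R) ^ (k - j) * k.choose j * P.eval (j : R) =
      k.factorial * P.coeff k := by
  have key : (fwdDiff (1 : R))^[k] P.eval 0 = k.factorial * P.coeff k := by
    rcases hP.lt_or_eq with hlt | rfl
    · rw [fwdDiff_iter_eq_zero_of_degree_lt hlt, coeff_eq_zero_of_natDegree_lt hlt]
      simp
    · rw [fwdDiff_iter_degree_eq_factorial, leadingCoeff]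
      simp [mul_comm]
  rw [← key, fwdDiff_iter_eq_sum_shift]
  refine sum_congr rfl fun j _ => ?_
  simp [zsmul_eq_mul]

theorem sum_range_alternating_choose_mul_prod_add {R : Type*} [CommRing R] (θ c : R)
    {ν k : ℕ} (hν : ν ≤ k) :
    ∑ j ∈ range (k + 1), (-1 : R) ^ (k - j) * k.choose j * ∏ i ∈ range ν, (c + θ * j + i) =
      if ν = k then k.factorial * θ ^ k else 0 := by
  set Q : R[X] := ∏ i ∈ range ν, (C θ * X + C (c + i))
  have hdeg : Q.natDegree ≤ ν := by
    refine (natDegree_prod_le _ _).trans ?_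
    simpa using sum_le_sum fun i (_ : i ∈ range ν) => natDegree_linear_le (a := θ) (b := c + i)
  have hcoeff : Q.coeff ν = θ ^ ν := by
    simpa [Q] using coeff_prod_of_natDegree_le (s := range ν) (fun i => C θ * X + C (c + i)) 1
      fun i _ => natDegree_linear_le
  have heval (j : ℕ) : Q.eval (j : R) = ∏ i ∈ range ν, (c + θ * j + i) := by
    simp only [Q, eval_prod, eval_add, eval_mul, eval_C, eval_X]
    exact prod_congr rfl fun i _ => by ring
  simp_rw [← heval, sum_range_alternating_choose_mul_eval (hdeg.trans hν)]
  split_ifs with h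
  · subst h; rw [hcoeff]
  · rw [coeff_eq_zero_of_natDegree_lt (hdeg.trans_lt (lt_of_le_of_ne hν h)), mul_zero]

theorem Real.Gamma_add_nat_eq_mul_prod {t : ℝ} (ht : ∀ m : ℕ, t + m ≠ 0) (n : ℕ) :
    Real.Gamma (t + n) = Real.Gamma t * ∏ i ∈ range n, (t + i) := by
  induction n with
  | zero => simp
  | succ n ih =>
    rw [Nat.cast_succ, ← add_assoc, Real.Gamma_add_one (ht n), ih, prod_range_succ]
    ring

theorem setIntegral_Ioi_rpow_mul_exp_neg_mul_sum_mul_sum {a θ : ℝ} (ha : -1 < a) (hθ : 0 ≤ θ)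
    (c : ℝ) (s t : Finset ℕ) (A B : ℕ → ℝ) :
    ∫ x in Set.Ioi (0 : ℝ), x ^ a * Real.exp (-x) * (c * ∑ ν ∈ s, x ^ ν * A ν) *
        ∑ j ∈ t, B j * (x ^ θ) ^ j =
      ∑ ν ∈ s, ∑ j ∈ t, c * A ν * B j * Real.Gamma (a + ν + θ * j + 1) := by
  have hpos (ν j : ℕ) : 0 < a + ν + θ * j + 1 := by
    have : 0 ≤ θ * j := by positivity
    have : (0 : ℝ) ≤ ν := by positivity
    linarith
  have hexpand : Set.EqOn
      (fun x : ℝ => x ^ a * Real.exp (-x) * (c * ∑ ν ∈ s, x ^ ν * A ν) * ∑ j ∈ t, B j * (x ^ θ) ^ j)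
      (fun x => ∑ ν ∈ s, ∑ j ∈ t,
        c * A ν * B j * (Real.exp (-x) * x ^ (a + ν + θ * j + 1 - 1))) (Set.Ioi 0) := by
    intro x (hx : 0 < x)
    have hpow (ν j : ℕ) : x ^ (a + ν + θ * j + 1 - 1) = x ^ a * x ^ ν * (x ^ θ) ^ j := by
      rw [add_sub_cancel_right, Real.rpow_add hx, Real.rpow_add hx, Real.rpow_natCast,
        Real.rpow_mul hx.le, Real.rpow_natCast]
    simp only [hpow, mul_sum, sum_mul]
    rw [sum_comm]
    exact sum_congr rfl fun ν _ => sum_congr rfl fun j _ => by ring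
  have hint (ν j : ℕ) (r : ℝ) :
      Integrable (fun x => r * (Real.exp (-x) * x ^ (a + ν + θ * j + 1 - 1)))
        (volume.restrict (Set.Ioi 0)) :=
    (Real.GammaIntegral_convergent (hpos ν j)).const_mul r
  rw [setIntegral_congr_fun measurableSet_Ioi hexpand,
    integral_finsetSum _ fun ν _ => integrable_finsetSum _ fun j _ => hint ν j _]
  refine sum_congr rfl fun ν _ => ?_
  rw [integral_finsetSum _ fun j _ => hint ν j _]
  refine sum_congr rfl fun j _ => ?_
  rw [integral_const_mul, ← Real.Gamma_eq_integral (hpos ν j)]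

theorem sum_alternating_choose_Gamma_ratio_mul_Gamma {a θ : ℝ} (ha : -1 < a) (hθ : 0 ≤ θ)
    {ν k : ℕ} (hν : ν ≤ k) :
    ∑ j ∈ range (k + 1), (-1 : ℝ) ^ (k - j) * k.choose j *
        (Real.Gamma (1 + a + θ * k) / Real.Gamma (1 + a + θ * j)) * Real.Gamma (a + ν + θ * j + 1) =
      Real.Gamma (1 + a + θ * k) * if ν = k then k.factorial * θ ^ k else 0 := by
  rw [← sum_range_alternating_choose_mul_prod_add θ (1 + a) hν, mul_sum]
  refine sum_congr rfl fun j _ => ?_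
  have hj : 0 < 1 + a + θ * j := by
    have : 0 ≤ θ * j := by positivity
    linarith
  rw [show a + ν + θ * j + 1 = 1 + a + θ * j + ν by ring,
    Real.Gamma_add_nat_eq_mul_prod fun m => (add_pos_of_pos_of_nonneg hj m.cast_nonneg).ne']
  field_simp [(Real.Gamma_pos_of_pos hj).ne']

theorem sum_alternating_Gamma_ratio_div_factorial {a θ : ℝ} (ha : -1 < a) (hθ : 0 < θ) (k : ℕ) :
    ∑ s ∈ range (k + 1), (-1 : ℝ) ^ (k - s) / ((k - s).factorial * s.factorial) *
        (Real.Gamma (k + (a + s + 1) / θ) / Real.Gamma ((a + s + 1) / θ)) = (θ ^ k)⁻¹ := by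
  have hpos (s : ℕ) : 0 < (a + s + 1) / θ := by
    have : (0 : ℝ) ≤ s := s.cast_nonneg
    exact div_pos (by linarith) hθ
  have key := sum_range_alternating_choose_mul_prod_add θ⁻¹ ((a + 1) / θ) le_rfl (k := k)
  rw [if_pos rfl] at key
  calc _ = (k.factorial : ℝ)⁻¹ * ∑ s ∈ range (k + 1), (-1 : ℝ) ^ (k - s) * k.choose s *
        ∏ i ∈ range k, ((a + 1) / θ + θ⁻¹ * s + i) := by
        rw [mul_sum]
        refine sum_congr rfl fun s hs => ?_
        rw [add_comm (k : ℝ), Real.Gamma_add_nat_eq_mul_prod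
          fun m => (add_pos_of_pos_of_nonneg (hpos s) m.cast_nonneg).ne',
          Nat.cast_choose ℝ (mem_range_succ_iff.mp hs)]
        have : (a + 1) / θ + θ⁻¹ * s = (a + s + 1) / θ := by field_simp; ring
        simp only [this]
        field_simp [(Real.Gamma_pos_of_pos (hpos s)).ne']
    _ = (θ ^ k)⁻¹ := by rw [key, inv_pow]; field_simp

/-- Laguerre biorthogonal normalisation: ∫_0^∞ x^a e^{-x} p_k(x) q_k(x^θ) dx
= θ^k Γ(θk+a+1) Γ(k+1). -/
theorem laguerre_biorthogonal_norm (k : ℕ) (a θ : ℝ) (ha : -1 < a) (hθ : 0 < θ) :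
    ∫ x in Set.Ioi (0:ℝ),
        x ^ a * Real.exp (-x) *
          (θ ^ k * ∑ ν ∈ Finset.range (k + 1), x ^ ν *
            ∑ s ∈ Finset.range (ν + 1),
              ((-1 : ℝ) ^ (k - s) / ((Nat.factorial (ν - s)) * (Nat.factorial s))) *
                (Real.Gamma (k + (a + s + 1) / θ) / Real.Gamma ((a + s + 1) / θ))) *
          (∑ j ∈ Finset.range (k + 1),
            (-1 : ℝ) ^ (k - j) * (Nat.choose k j) *
              (Real.Gamma (1 + a + θ * k) / Real.Gamma (1 + a + θ * j)) * (x ^ θ) ^ j) =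
      θ ^ k * Real.Gamma (θ * k + a + 1) * Real.Gamma (k + 1) := by
  set S : ℕ → ℝ := fun ν => ∑ s ∈ range (ν + 1),
    (-1 : ℝ) ^ (k - s) / ((ν - s).factorial * s.factorial) *
      (Real.Gamma (k + (a + s + 1) / θ) / Real.Gamma ((a + s + 1) / θ))
  have hS : S k = (θ ^ k)⁻¹ := sum_alternating_Gamma_ratio_div_factorial ha hθ k
  refine (setIntegral_Ioi_rpow_mul_exp_neg_mul_sum_mul_sum ha hθ.le (θ ^ k) _ _ S _).trans ?_
  clear_value S
  have hinner : ∀ ν ∈ range (k + 1), ∑ j ∈ range (k + 1), θ ^ k * S ν *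
      ((-1 : ℝ) ^ (k - j) * k.choose j *
        (Real.Gamma (1 + a + θ * k) / Real.Gamma (1 + a + θ * j))) * Real.Gamma (a + ν + θ * j + 1) =
      θ ^ k * S ν * (Real.Gamma (1 + a + θ * k) * if ν = k then k.factorial * θ ^ k else 0) :=
    fun ν hν => by
      rw [← sum_alternating_choose_Gamma_ratio_mul_Gamma ha hθ.le (mem_range_succ_iff.mp hν),
        mul_sum]
      exact sum_congr rfl fun j _ => by ring
  rw [sum_congr rfl hinner]
  simp only [mul_ite, mul_zero, sum_ite_eq', mem_range, lt_add_one, if_true]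
  rw [hS, ← Real.Gamma_nat_eq_factorial, show θ * k + a + 1 = 1 + a + θ * k by ring]
  field_simp
end

section
/- Pieri-type expansion: for distinct reals γ_1,...,γ_N and positive reals x_1,...,x_N, e_{N-ν}(x_1,...,x_N) · det[x_j^{γ_i}]_{i,j=1}^N = Σ_{1≤l_1<...<l_{N-ν}≤N} det[x_j^{γ_i^{(l)}}]_{i,j=1}^N, where γ_i^{(l)} = γ_i + 1 if i ∈ {l_1,...,l_{N-ν}} and γ_i^{(l)} = γ_i otherwise. -/
/-!
Since `x ^ (γ + 1) = x ^ γ * x`, the determinant indexed by `S` is that of `[x_j ^ γ_i]` with the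
rows in `S` multiplied entrywise by `x`. In the Leibniz expansion the term of a permutation `σ`
thereby acquires the factor `∏_{i ∈ S} x_{σ i}`, and summing over `S` turns it into
`e_{N-ν}(x ∘ σ) = e_{N-ν}(x)`.
-/

open Finset

theorem Finset.sum_powersetCard_prod_comp_perm {ι R : Type*} [Fintype ι] [DecidableEq ι]
    [CommSemiring R] (σ : Equiv.Perm ι) (f : ι → R) (k : ℕ) :
    ∑ T ∈ univ.powersetCard k, ∏ i ∈ T, f (σ i) = ∑ T ∈ univ.powersetCard k, ∏ i ∈ T, f i := by
  conv_rhs => rw [← map_univ_equiv σ, powersetCard_map, sum_map]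
  simp only [RelEmbedding.coe_toEmbedding, mapEmbedding_apply, prod_map, Equiv.coe_toEmbedding]

theorem Matrix.sum_powersetCard_det_mul_rows {n R : Type*} [Fintype n] [DecidableEq n]
    [CommRing R] (A : Matrix n n R) (v : n → R) (k : ℕ) :
    ∑ S ∈ univ.powersetCard k, det (of fun i j => if i ∈ S then A i j * v j else A i j) =
      (∑ T ∈ univ.powersetCard k, ∏ i ∈ T, v i) * det A := by
  have hterm : ∀ (σ : Equiv.Perm n) (S : Finset n),
      ∏ i, (if i ∈ S then A i (σ i) * v (σ i) else A i (σ i)) =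
        (∏ i, A i (σ i)) * ∏ i ∈ S, v (σ i) := by
    intro σ S
    conv_rhs => rw [← univ_inter S, ← prod_ite_mem, ← prod_mul_distrib]
    simp only [mul_ite, mul_one]
  have hdet : ∀ M : Matrix n n R, M.det = ∑ σ : Equiv.Perm n, σ.sign • ∏ i, M i (σ i) :=
    fun M => by rw [← det_transpose, det_apply]; rfl
  simp only [hdet, of_apply, hterm]
  rw [Finset.sum_comm (s := powersetCard k univ), mul_sum]
  refine sum_congr rfl fun σ _ => ?_
  simp only [smul_mul_assoc, ← smul_sum, ← mul_sum, sum_powersetCard_prod_comp_perm, mul_comm]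

theorem pieri_type_expansion_general (N ν : ℕ)
    (γ : Fin N → ℝ)
    (x : Fin N → ℝ) (hx : ∀ i, 0 < x i) :
    (∑ T ∈ Finset.univ.powersetCard (N - ν), ∏ i ∈ T, x i) *
        Matrix.det (Matrix.of fun i j : Fin N => x j ^ γ i) =
      ∑ S ∈ Finset.univ.powersetCard (N - ν),
        Matrix.det (Matrix.of fun i j : Fin N =>
          x j ^ (if i ∈ S then γ i + 1 else γ i)) := by
  have hpow : ∀ (S : Finset (Fin N)) i j,
      x j ^ (if i ∈ S then γ i + 1 else γ i) = if i ∈ S then x j ^ γ i * x j else x j ^ γ i :=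
    fun S i j => by split_ifs <;> simp [Real.rpow_add_one (hx j).ne']
  simp only [hpow]
  exact (Matrix.sum_powersetCard_det_mul_rows (Matrix.of fun i j => x j ^ γ i) x _).symm

/-- Pieri-type expansion: e_{N-ν}(x)·det[x_j^{γ_i}] = Σ over (N-ν)-subsets S of the
determinants with exponents γ_i incremented on S. -/
theorem pieri_type_expansion (N ν : ℕ) (hν : ν ≤ N)
    (γ : Fin N → ℝ) (hγ : Function.Injective γ)
    (x : Fin N → ℝ) (hx : ∀ i, 0 < x i) :
    (∑ T ∈ Finset.univ.powersetCard (N - ν), ∏ i ∈ T, x i) *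
        Matrix.det (Matrix.of fun i j : Fin N => x j ^ γ i) =
      ∑ S ∈ Finset.univ.powersetCard (N - ν),
        Matrix.det (Matrix.of fun i j : Fin N =>
          x j ^ (if i ∈ S then γ i + 1 else γ i)) :=
  pieri_type_expansion_general N ν γ x hx
end
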